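/- arXiv:math/0205286 — 3 statements merged into one kernel-verified Lean document; each statement's English description precedes it below -/
import Mathlib

section
/- The fusion product on levels at most l is associative at the level of multiplicities: for all i, j, k ≤ l and m ≤ l, the multiplicity of V_m in (V_i ⊗_l V_j) ⊗_l V_k equals the multiplicity of V_m in V_i ⊗_l (V_j ⊗_l V_k). -/
/-- The level-`l` fusion coefficient `N_{ij}^k` for `sl₂`:
`N_{ij}^k = 1` if `|i - j| ≤ k ≤ min (i+j) (2l - i - j)` and `i + j + k` is
even, and `0` otherwise. -/
def fusionN (l i j k : ℕ) : ℕ :=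
  if max i j - min i j ≤ k ∧ k ≤ min (i + j) (2 * l - (i + j)) ∧
      (i + j + k) % 2 = 0 then 1 else 0

/-- lower bound of the fusion interval for the partition `{a,b},{c,d}`. -/
def fusLB (a b c d : ℕ) : ℕ := max (max a b - min a b) (max c d - min c d)

/-- upper bound of the fusion interval for the partition `{a,b},{c,d}`. -/
def fusUB (l a b c d : ℕ) : ℕ :=
  min (min (a + b) (2 * l - (a + b))) (min (c + d) (2 * l - (c + d)))

lemma fusLB_choice (a b c d : ℕ) :
    fusLB a b c d = max a b - min a b ∨ fusLB a b c d = max c d - min c d := by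
  unfold fusLB; omega

lemma fusUB_choice (l a b c d : ℕ) :
    fusUB l a b c d = a + b ∨ fusUB l a b c d = 2 * l - (a + b) ∨
      fusUB l a b c d = c + d ∨ fusUB l a b c d = 2 * l - (c + d) := by
  unfold fusUB; omega

set_option maxHeartbeats 3200000 in
/-- Half of the key combinatorial inequality. -/
lemma fus_keyhalf (l a b c d : ℕ) (ha : a ≤ l) (hb : b ≤ l) (hc : c ≤ l) (hd : d ≤ l) :
    fusUB l a b c d + (max b c - min b c) ≤ fusUB l b c a d + fusLB a b c d := by
  rcases fusUB_choice l b c a d with h2 | h2 | h2 | h2 <;> rw [h2] <;> unfold fusUB fusLB <;>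
    rcases le_total a b with h | h <;> rcases le_total c d with h' | h' <;>
    rcases le_total b c with h'' | h'' <;>
    (first
      | simp only [(show max a b - min a b = b - a by omega)]
      | simp only [(show max a b - min a b = a - b by omega)]) <;>
    (first
      | simp only [(show max c d - min c d = d - c by omega)]
      | simp only [(show max c d - min c d = c - d by omega)]) <;>
    (first
      | simp only [(show max b c - min b c = c - b by omega)]
      | simp only [(show max b c - min b c = b - c by omega)]) <;>
    zify [h, h', h'', show a + b ≤ 2*l by omega, show c + d ≤ 2*l by omega,
      show b + c ≤ 2*l by omega, show a + d ≤ 2*l by omega] <;>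
    omega

/-- The key combinatorial inequality. -/
lemma fus_key (l a b c d : ℕ) (ha : a ≤ l) (hb : b ≤ l) (hc : c ≤ l) (hd : d ≤ l) :
    fusUB l a b c d + fusLB b c a d ≤ fusUB l b c a d + fusLB a b c d := by
  rcases fusLB_choice b c a d with h1 | h1 <;> rw [h1]
  · exact fus_keyhalf l a b c d ha hb hc hd
  · have h := fus_keyhalf l b a d c hb ha hd hc
    rw [show fusUB l b a d c = fusUB l a b c d from by unfold fusUB; omega,
        show fusUB l a d b c = fusUB l b c a d from by unfold fusUB; omega,
        show fusLB b a d c = fusLB a b c d from by unfold fusLB; omega] at h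
    exact h

/-- Counting points of fixed parity in an interval. -/
lemma fus_count (n a b r : ℕ) (hb : b < n) (har : a % 2 = r) :
    ((Finset.range n).filter (fun p => a ≤ p ∧ p ≤ b ∧ p % 2 = r)).card
      = if a ≤ b then (b - a) / 2 + 1 else 0 := by
  split_ifs with hab
  · have him : (Finset.range n).filter (fun p => a ≤ p ∧ p ≤ b ∧ p % 2 = r)
        = (Finset.range ((b - a) / 2 + 1)).image (fun t => a + 2 * t) := by
      ext p
      simp only [Finset.mem_filter, Finset.mem_image, Finset.mem_range]
      constructor
      · rintro ⟨h1, h2, h3, h4⟩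
        exact ⟨(p - a) / 2, by omega, by omega⟩
      · rintro ⟨t, ht, rfl⟩
        omega
    rw [him, Finset.card_image_of_injective _ (fun x y h => by omega),
      Finset.card_range]
  · rw [Finset.filter_eq_empty_iff.mpr (fun p _ => by omega), Finset.card_empty]

lemma fus_count' (n x1 x2 y1 y2 r : ℕ) (hy : min y1 y2 < n) (har : max x1 x2 % 2 = r) :
    (∑ p ∈ Finset.range n, if x1 ≤ p ∧ x2 ≤ p ∧ p ≤ y1 ∧ p ≤ y2 ∧ p % 2 = r then 1 else 0)
      = if max x1 x2 ≤ min y1 y2 then (min y1 y2 - max x1 x2) / 2 + 1 else 0 := by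
  rw [← Finset.card_filter]
  rw [show (Finset.range n).filter (fun p => x1 ≤ p ∧ x2 ≤ p ∧ p ≤ y1 ∧ p ≤ y2 ∧ p % 2 = r)
      = (Finset.range n).filter (fun p => max x1 x2 ≤ p ∧ p ≤ min y1 y2 ∧ p % 2 = r) from
    Finset.filter_congr (fun p _ => by omega)]
  exact fus_count n _ _ _ hy har

set_option maxHeartbeats 3200000 in
lemma fus_term (l a b c d p : ℕ) (ha : a ≤ l) (hb : b ≤ l) (hc : c ≤ l) (hd : d ≤ l)
    (heven : (a + b + c + d) % 2 = 0) :
    fusionN l a b p * fusionN l p c d =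
      if max a b - min a b ≤ p ∧ max c d - min c d ≤ p ∧
          p ≤ min (a + b) (2 * l - (a + b)) ∧ p ≤ min (c + d) (2 * l - (c + d)) ∧
          p % 2 = (a + b) % 2
      then 1 else 0 := by
  unfold fusionN
  rcases le_total a b with h | h <;> rcases le_total c d with h' | h' <;>
    rcases le_total p c with h'' | h'' <;>
    (first
      | simp only [(show max a b - min a b = b - a by omega)]
      | simp only [(show max a b - min a b = a - b by omega)]) <;>
    (first
      | simp only [(show max c d - min c d = d - c by omega)]
      | simp only [(show max c d - min c d = c - d by omega)]) <;>
    (first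
      | simp only [(show max p c - min p c = c - p by omega)]
      | simp only [(show max p c - min p c = p - c by omega)]) <;>
    simp only [le_min_iff] <;>
    split_ifs <;> omega

lemma fus_sum (l a b c d : ℕ) (ha : a ≤ l) (hb : b ≤ l) (hc : c ≤ l) (hd : d ≤ l)
    (heven : (a + b + c + d) % 2 = 0) :
    ∑ p ∈ Finset.range (l + 1), fusionN l a b p * fusionN l p c d =
      if fusLB a b c d ≤ fusUB l a b c d
      then (fusUB l a b c d - fusLB a b c d) / 2 + 1 else 0 := by
  rw [Finset.sum_congr rfl (fun p _ => fus_term l a b c d p ha hb hc hd heven)]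
  have hcount := fus_count' (l + 1) (max a b - min a b) (max c d - min c d)
      (min (a + b) (2 * l - (a + b))) (min (c + d) (2 * l - (c + d))) ((a + b) % 2)
      (by omega) (by omega)
  rw [hcount]
  rfl

lemma fusionN_comm (l a b k : ℕ) : fusionN l a b k = fusionN l b a k := by
  unfold fusionN
  simp only [max_comm a b, min_comm a b, add_comm a b]

/-- **Associativity of the level-`l` `sl₂` fusion product at the level of
multiplicities**: for all `i, j, k, m ≤ l`, the multiplicity of `V_m` in
`(V_i ⊗_l V_j) ⊗_l V_k` equals the multiplicity of `V_m` in
`V_i ⊗_l (V_j ⊗_l V_k)`, i.e.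
`∑_p N_{ij}^p N_{pk}^m = ∑_q N_{jk}^q N_{iq}^m`. -/
theorem fusion_associative (l i j k m : ℕ)
    (hi : i ≤ l) (hj : j ≤ l) (hk : k ≤ l) (hm : m ≤ l) :
    ∑ p ∈ Finset.range (l + 1), fusionN l i j p * fusionN l p k m =
      ∑ q ∈ Finset.range (l + 1), fusionN l j k q * fusionN l i q m := by
  by_cases heven : (i + j + k + m) % 2 = 0
  · have hr : ∑ q ∈ Finset.range (l + 1), fusionN l j k q * fusionN l i q m
        = ∑ q ∈ Finset.range (l + 1), fusionN l j k q * fusionN l q i m :=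
      Finset.sum_congr rfl (fun q _ => by rw [fusionN_comm l i q m])
    rw [hr, fus_sum l i j k m hi hj hk hm heven,
      fus_sum l j k i m hj hk hi hm (by omega)]
    have e1 : fusUB l i j k m + fusLB j k i m = fusUB l j k i m + fusLB i j k m := by
      refine le_antisymm (fus_key l i j k m hi hj hk hm) ?_
      have h := fus_key l m i j k hm hi hj hk
      rw [show fusUB l m i j k = fusUB l j k i m from by unfold fusUB; omega,
          show fusLB i j m k = fusLB i j k m from by unfold fusLB; omega,
          show fusUB l i j m k = fusUB l i j k m from by unfold fusUB; omega,
          show fusLB m i j k = fusLB j k i m from by unfold fusLB; omega] at h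
      exact h
    split_ifs <;> omega
  · rw [Finset.sum_eq_zero, Finset.sum_eq_zero]
    · intro q _
      unfold fusionN
      split_ifs with h1 h2 h3 <;> try simp
      obtain ⟨-, -, e1⟩ := h1
      obtain ⟨-, -, e2⟩ := h2
      omega
    · intro p _
      unfold fusionN
      split_ifs with h1 h2 h3 <;> try simp
      obtain ⟨-, -, e1⟩ := h1
      obtain ⟨-, -, e2⟩ := h2
      omega
end

section
/- Let W be a finite-dimensional vector space over ℂ of dimension w, and let V have dimension v. The map (i,j) ↦ (j∘i, Im j) induces a bijection from the set M(v,w) = {(i,j) ∈ Hom(W,V) × Hom(V,W) : i∘j = 0, j injective} modulo the GL(V)-action g·(i,j) = (g∘i, j∘g^{-1}), onto the variety F_{v,w} = {(t, V₀) : t ∈ End(W), V₀ ⊆ W a v-dimensional subspace, t² = 0, Im t ⊆ V₀ ⊆ ker t}. -/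
/-!
A point `(i, j)` of `M(v,w)` is recorded by `(j ∘ i, Im j)`: since `j` is injective, `Im j`
determines `j` up to an automorphism of `V`, and then `j ∘ i` determines `i`, which gives the
`GL(V)`-orbits as fibres. Conversely, given `(t, V₀) ∈ F_{v,w}`, identify `V` with `V₀` and
factor `t` through `V₀ ⊇ Im t`; the factors compose to zero the other way round because
`V₀ ⊆ ker t`.
-/

open Module LinearMap

variable (W V : Type) [AddCommGroup W] [Module ℂ W] [AddCommGroup V] [Module ℂ V]

/-- The space `M(v,w) = {(i,j) : i ∘ j = 0, j injective}
⊆ Hom(W,V) × Hom(V,W)`. -/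
def Mvw : Set ((W →ₗ[ℂ] V) × (V →ₗ[ℂ] W)) :=
  {p | p.1 ∘ₗ p.2 = 0 ∧ Function.Injective p.2}

/-- Two points of `M(v,w)` are equivalent iff they differ by the `GL(V)`-action
`g · (i, j) = (g ∘ i, j ∘ g⁻¹)`. -/
def glRel (p q : Mvw W V) : Prop :=
  ∃ g : V ≃ₗ[ℂ] V, q.val.1 = (g : V →ₗ[ℂ] V) ∘ₗ p.val.1 ∧
    q.val.2 = p.val.2 ∘ₗ (g.symm : V →ₗ[ℂ] V)

/-- The variety `F_{v,w} = {(t, V₀) : t² = 0, Im t ⊆ V₀ ⊆ ker t, dim V₀ = v}`. -/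
def Fvw (v : ℕ) : Set ((W →ₗ[ℂ] W) × Submodule ℂ W) :=
  {q | q.1 ∘ₗ q.1 = 0 ∧ range q.1 ≤ q.2 ∧ q.2 ≤ ker q.1 ∧ finrank ℂ q.2 = v}

section Factorization

variable {R M N P : Type*} [Semiring R] [AddCommMonoid M] [Module R M]
  [AddCommMonoid N] [Module R N] [AddCommMonoid P] [Module R P]

theorem LinearMap.comp_comp_self_eq_zero {i : M →ₗ[R] N} {j : N →ₗ[R] M} (h : i ∘ₗ j = 0) :
    (j ∘ₗ i) ∘ₗ (j ∘ₗ i) = 0 := by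
  rw [comp_assoc, ← comp_assoc i, h, zero_comp, comp_zero]

theorem LinearMap.range_le_ker_comp {i : M →ₗ[R] N} {j : N →ₗ[R] M} (h : i ∘ₗ j = 0) :
    range j ≤ ker (j ∘ₗ i) := by
  rintro _ ⟨y, rfl⟩
  simp only [mem_ker, comp_apply, ← comp_apply i j, h, zero_apply, map_zero]

theorem LinearMap.exists_factor_of_range_le_le_ker {t : M →ₗ[R] M} {V₀ : Submodule R M}
    (e : N ≃ₗ[R] V₀) (hrt : range t ≤ V₀) (htk : V₀ ≤ ker t) :
    ∃ (i : M →ₗ[R] N) (j : N →ₗ[R] M),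
      i ∘ₗ j = 0 ∧ Function.Injective j ∧ j ∘ₗ i = t ∧ range j = V₀ := by
  let t₀ : M →ₗ[R] V₀ := t.codRestrict V₀ fun x => hrt ⟨x, rfl⟩
  refine ⟨e.symm.toLinearMap ∘ₗ t₀, V₀.subtype ∘ₗ e.toLinearMap, ?_, ?_, ?_, ?_⟩
  · ext x
    have : t₀ (e x) = 0 := Subtype.ext (htk (e x).2)
    simp [this]
  · exact V₀.injective_subtype.comp e.injective
  · ext x
    simp [t₀]
  · rw [range_comp, LinearEquiv.range, Submodule.map_top, Submodule.range_subtype]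

theorem LinearMap.exists_linearEquiv_comp_eq_of_range_eq {j : N →ₗ[R] M} {j' : P →ₗ[R] M}
    (hj : Function.Injective j) (hj' : Function.Injective j') (h : range j = range j') :
    ∃ g : N ≃ₗ[R] P, j' ∘ₗ g.toLinearMap = j := by
  let e' := LinearEquiv.ofInjective j' hj'
  refine ⟨(LinearEquiv.ofInjective j hj).trans ((LinearEquiv.ofEq _ _ h).trans e'.symm), ?_⟩
  ext x
  rw [comp_apply, ← LinearEquiv.ofInjective_apply (h := hj')]
  simp [e']

theorem LinearMap.exists_linearEquiv_eq_iff_comp_eq_and_range_eq {i i' : M →ₗ[R] N}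
    {j j' : N →ₗ[R] M} (hj : Function.Injective j) (hj' : Function.Injective j') :
    (∃ g : N ≃ₗ[R] N, i' = g.toLinearMap ∘ₗ i ∧ j' = j ∘ₗ g.symm.toLinearMap) ↔
      j ∘ₗ i = j' ∘ₗ i' ∧ range j = range j' := by
  constructor
  · rintro ⟨g, rfl, rfl⟩
    refine ⟨by ext x; simp, ?_⟩
    rw [range_comp, LinearEquiv.range, Submodule.map_top]
  · rintro ⟨hji, hrange⟩
    obtain ⟨g, hg⟩ := exists_linearEquiv_comp_eq_of_range_eq hj hj' hrange
    refine ⟨g, ?_, ?_⟩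
    · ext x
      apply hj'
      rw [← comp_apply j' i', ← hji, ← hg]
      rfl
    · rw [← hg, comp_assoc, ← LinearEquiv.coe_trans, LinearEquiv.symm_trans_self]
      rfl

end Factorization

theorem mem_Fvw_of_mem_Mvw {v : ℕ} {p : (W →ₗ[ℂ] V) × (V →ₗ[ℂ] W)} (hp : p ∈ Mvw W V)
    (hV : finrank ℂ V = v) : (p.2 ∘ₗ p.1, range p.2) ∈ Fvw W v :=
  ⟨comp_comp_self_eq_zero hp.1, range_comp_le_range _ _, range_le_ker_comp hp.1,
    (finrank_range_of_inj hp.2).trans hV⟩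

theorem glRel_iff (p p' : Mvw W V) :
    glRel W V p p' ↔
      p.val.2 ∘ₗ p.val.1 = p'.val.2 ∘ₗ p'.val.1 ∧ range p.val.2 = range p'.val.2 :=
  exists_linearEquiv_eq_iff_comp_eq_and_range_eq p.2.2 p'.2.2

theorem quiver_variety_iso_Fvw (v : ℕ)
    [FiniteDimensional ℂ W] [FiniteDimensional ℂ V]
    (hV : finrank ℂ V = v) :
    (∀ p : Mvw W V,
      (p.val.2 ∘ₗ p.val.1, range p.val.2) ∈ Fvw W v) ∧
    (∀ q ∈ Fvw W v, ∃ p : Mvw W V,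
      (p.val.2 ∘ₗ p.val.1, range p.val.2) = q) ∧
    (∀ p p' : Mvw W V,
      ((p.val.2 ∘ₗ p.val.1, range p.val.2) =
        (p'.val.2 ∘ₗ p'.val.1, range p'.val.2) ↔ glRel W V p p')) := by
  refine ⟨fun p => mem_Fvw_of_mem_Mvw W V p.2 hV, ?_,
    fun p p' => Prod.ext_iff.trans (glRel_iff W V p p').symm⟩
  rintro ⟨t, V₀⟩ ⟨-, hrt, htk, hV₀⟩
  obtain ⟨i, j, hij, hj, hji, hrj⟩ :=
    exists_factor_of_range_le_le_ker (LinearEquiv.ofFinrankEq V V₀ (hV.trans hV₀.symm)) hrt htk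
  exact ⟨⟨(i, j), hij, hj⟩, by rw [hji, hrj]⟩
end

section
/- The number of crossingless matches in CM_{w₁,w₂}^μ is 1 if |w₁ - w₂| ≤ μ ≤ w₁ + w₂ and μ ≡ w₁ + w₂ (mod 2), and 0 otherwise. -/
/-- The index of the box containing vertex `v`, for boxes of sizes `sizes`
placed in order (vertices numbered consecutively). -/
def boxOf : List ℕ → ℕ → ℕ
  | [], _ => 0
  | w :: ws, v => if v < w then 0 else boxOf ws (v - w) + 1

/-- `f` is a crossingless match for boxes of sizes `sizes`: a perfect
(fixed-point-free involutive) non-crossing matching of the `sizes.sum`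
vertices such that no curve joins a box to itself.  (The last box plays the
role of the upper box; the remaining boxes are the lower boxes.) -/
def IsCM (sizes : List ℕ) (f : Fin sizes.sum → Fin sizes.sum) : Prop :=
  Function.Involutive f ∧ (∀ i, f i ≠ i) ∧
    (∀ i j : Fin sizes.sum, i < j → j < f i → f i < f j → False) ∧
    (∀ i : Fin sizes.sum, boxOf sizes (i : ℕ) ≠ boxOf sizes ((f i : Fin sizes.sum) : ℕ))

/-- The number of curves of the match `f` joining box `p` to box `q`
(for `p ≠ q`). -/
noncomputable def curvesBtw (sizes : List ℕ) (f : Fin sizes.sum → Fin sizes.sum)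
    (p q : ℕ) : ℕ :=
  Nat.card {i : Fin sizes.sum // boxOf sizes (i : ℕ) = p ∧
    boxOf sizes ((f i : Fin sizes.sum) : ℕ) = q}

/-- The total number of curves of the match `f`. -/
noncomputable def numCurves (sizes : List ℕ) (f : Fin sizes.sum → Fin sizes.sum) : ℕ :=
  Nat.card {i : Fin sizes.sum // (i : ℕ) < ((f i : Fin sizes.sum) : ℕ)}

/-- The number of crossingless matches in `CM_{w₁,…,w_r}^μ`, where
`sizes = [w₁, …, w_r, μ]`. -/
noncomputable def cmCount (sizes : List ℕ) : ℕ :=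
  Nat.card {f : Fin sizes.sum → Fin sizes.sum // IsCM sizes f}



lemma boxOf_eval (x y z v : ℕ) (hv : v < x + y + z) :
    boxOf [x, y, z] v = if v < x then 0 else if v < x + y then 1 else 2 := by
  simp only [boxOf]
  split_ifs <;> omega

/-- skip map: insert two vertices at positions `i, i+1`. -/
def eN (i k : ℕ) : ℕ := if k < i then k else k + 2
/-- delete map. -/
def rN (i v : ℕ) : ℕ := if v < i then v else v - 2

/-- the explicit crossingless matching with `a` curves box0–box2, `b` curves
box1–box2, `c` curves box0–box1 (on `2*(a+b+c)` vertices). -/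
def G (a b c v : ℕ) : ℕ :=
  if v < a ∨ a + 2*b + 2*c ≤ v then 2*(a+b+c) - 1 - v
  else if v < a + 2*c then 2*(a+c) - 1 - v
  else 2*(a+b+2*c) - 1 - v

lemma G_lt (a b c v : ℕ) (hv : v < 2*(a+b+c)) : G a b c v < 2*(a+b+c) := by
  unfold G; split_ifs <;> omega

lemma G_invol (a b c v : ℕ) (hv : v < 2*(a+b+c)) : G a b c (G a b c v) = v := by
  unfold G; split_ifs <;> omega

lemma G_ne (a b c v : ℕ) (hv : v < 2*(a+b+c)) : G a b c v ≠ v := by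
  unfold G; split_ifs <;> omega

lemma G_nc (a b c v w : ℕ) (hv : v < 2*(a+b+c)) (hw : w < 2*(a+b+c))
    (h1 : v < w) (h2 : w < G a b c v) (h3 : G a b c v < G a b c w) : False := by
  unfold G at h2 h3; split_ifs at h2 h3 <;> omega

lemma G_box (a b c v : ℕ) (hv : v < 2*(a+b+c)) :
    boxOf [a+c, b+c, a+b] v ≠ boxOf [a+c, b+c, a+b] (G a b c v) := by
  have h1 := G_lt a b c v hv
  rw [boxOf_eval _ _ _ _ (by omega), boxOf_eval _ _ _ _ (by omega)]
  unfold G; split_ifs <;> omega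

/-- compat A : pair (a+c-1, a+c) joining box0–box1, c ≥ 1 -/
lemma compatA (a b c c' x : ℕ) (hc : c = c' + 1) (hx : x < 2*(a+b+c))
    (h1 : x ≠ a+c-1) (h2 : x ≠ a+c) :
    eN (a+c-1) (G a b c' (rN (a+c-1) x)) = G a b c x := by
  subst hc; have : c' + 1 - 1 = c' := rfl
  unfold G eN rN; split_ifs <;> omega

/-- compat B : pair (a-1, a) joining box0–box2 (b = c = 0), a ≥ 1 -/
lemma compatB (a a' x : ℕ) (ha : a = a' + 1) (hx : x < 2*a)
    (h1 : x ≠ a-1) (h2 : x ≠ a) :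
    eN (a-1) (G a' 0 0 (rN (a-1) x)) = G a 0 0 x := by
  subst ha
  unfold G eN rN; split_ifs <;> omega

/-- compat C : pair (a+b+2c-1, a+b+2c) joining box1–box2, b ≥ 1 -/
lemma compatC (a b c b' x : ℕ) (hb : b = b' + 1) (hx : x < 2*(a+b+c))
    (h1 : x ≠ a+b+2*c-1) (h2 : x ≠ a+b+2*c) :
    eN (a+b+2*c-1) (G a b' c (rN (a+b+2*c-1) x)) = G a b c x := by
  subst hb
  unfold G eN rN; split_ifs <;> omega


lemma sum3 (w₁ w₂ μ : ℕ) : [w₁, w₂, μ].sum = w₁ + w₂ + μ := by simp; ring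

noncomputable def Gfin (w₁ w₂ μ : ℕ) : Fin ([w₁,w₂,μ].sum) → Fin ([w₁,w₂,μ].sum) :=
  fun v => ⟨G (w₁ - (w₁+w₂-μ)/2) (w₂ - (w₁+w₂-μ)/2) ((w₁+w₂-μ)/2) (v : ℕ) % [w₁,w₂,μ].sum,
    Nat.mod_lt _ v.pos⟩

lemma Gfin_val (w₁ w₂ μ a b c : ℕ) (h₁ : w₁ = a + c) (h₂ : w₂ = b + c) (h₃ : μ = a + b)
    (v : Fin ([w₁,w₂,μ].sum)) : ((Gfin w₁ w₂ μ v : Fin _) : ℕ) = G a b c (v : ℕ) := by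
  subst h₁ h₂ h₃
  have hv : (v : ℕ) < (a+c) + (b+c) + (a+b) := lt_of_lt_of_eq v.isLt (sum3 _ _ _)
  have ha : (a+c) - ((a+c)+(b+c)-(a+b))/2 = a := by omega
  have hb : (b+c) - ((a+c)+(b+c)-(a+b))/2 = b := by omega
  have hc : ((a+c)+(b+c)-(a+b))/2 = c := by omega
  have hlt : G a b c (v : ℕ) < 2*(a+b+c) := G_lt a b c _ (by omega)
  simp only [Gfin, hc, Nat.add_sub_cancel]
  rw [Nat.mod_eq_of_lt (lt_of_lt_of_eq (by omega : G a b c (v:ℕ) < (a+c)+(b+c)+(a+b)) (sum3 _ _ _).symm)]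

lemma isCM_Gfin (w₁ w₂ μ a b c : ℕ) (h₁ : w₁ = a + c) (h₂ : w₂ = b + c) (h₃ : μ = a + b) :
    IsCM [w₁, w₂, μ] (Gfin w₁ w₂ μ) := by
  subst h₁ h₂ h₃
  have key : ∀ v, ((Gfin (a+c) (b+c) (a+b) v : Fin _) : ℕ) = G a b c (v : ℕ) :=
    Gfin_val _ _ _ a b c rfl rfl rfl
  have hvlt : ∀ v : Fin ([a+c,b+c,a+b].sum), (v : ℕ) < 2*(a+b+c) := by
    intro v; have := lt_of_lt_of_eq v.isLt (sum3 _ _ _); omega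
  refine ⟨?_, ?_, ?_, ?_⟩
  · intro v
    apply Fin.ext
    rw [key, key, G_invol a b c _ (hvlt v)]
  · intro v h
    have hk := key v
    rw [h] at hk
    exact G_ne a b c _ (hvlt v) hk.symm
  · intro v w hvw h2 h3
    rw [Fin.lt_def] at hvw h2 h3
    rw [key] at h2 h3
    rw [key] at h3
    exact G_nc a b c v w (hvlt v) (hvlt w) hvw h2 h3
  · intro v
    rw [key]
    exact G_box a b c v (hvlt v)

lemma exists_adj {n : ℕ} (f : Fin n → Fin n) (hinv : Function.Involutive f)
    (hfpf : ∀ i, f i ≠ i)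
    (hnc : ∀ i j : Fin n, i < j → j < f i → f i < f j → False)
    (hn : 0 < n) : ∃ i : Fin n, (i : ℕ) + 1 < n ∧ ((f i : Fin n) : ℕ) = (i : ℕ) + 1 := by
  have hinj : Function.Injective f := hinv.injective
  set S : Finset (Fin n) := Finset.univ.filter (fun i => i < f i) with hS
  have h0 : (⟨0, hn⟩ : Fin n) ∈ S := by
    simp only [hS, Finset.mem_filter, Finset.mem_univ, true_and, Fin.lt_def]
    have := hfpf ⟨0, hn⟩
    simp only [ne_eq, Fin.ext_iff] at this
    omega
  obtain ⟨i, hiS, hmin⟩ := S.exists_min_image (fun i => ((f i : Fin n) : ℕ) - (i : ℕ)) ⟨_, h0⟩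
  have hilt : (i : ℕ) < ((f i : Fin n) : ℕ) := by
    simp only [hS, Finset.mem_filter, Fin.lt_def] at hiS; exact hiS.2
  refine ⟨i, lt_of_le_of_lt hilt (f i).isLt, ?_⟩
  by_contra h
  have hgap : (i : ℕ) + 1 < ((f i : Fin n) : ℕ) := by omega
  have hvlt : (i : ℕ) + 1 < n := lt_trans hgap (f i).isLt
  set v : Fin n := ⟨(i : ℕ) + 1, hvlt⟩ with hv
  have hvne : f v ≠ v := hfpf v
  have hffv : f (f v) = v := hinv v
  have hfvi : ((f v : Fin n) : ℕ) ≠ (i : ℕ) := by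
    intro hh
    have h1 : f v = i := Fin.ext hh
    have h2 : v = f i := by rw [← h1, hinv]
    rw [Fin.ext_iff] at h2
    simp only [hv] at h2
    omega
  have hfvlt : ¬ ((f v : Fin n) : ℕ) < (i : ℕ) := by
    intro hh
    exact hnc (f v) i (Fin.lt_def.2 hh)
      (by rw [hffv, Fin.lt_def]; simp [hv])
      (by rw [hffv, Fin.lt_def]; simpa [hv] using hgap)
  have hfvgt : ¬ ((f i : Fin n) : ℕ) < ((f v : Fin n) : ℕ) := by
    intro hh
    exact hnc i v (Fin.lt_def.2 (by simp [hv])) (Fin.lt_def.2 (by simp [hv]; omega))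
      (Fin.lt_def.2 hh)
  have hfvne : ((f v : Fin n) : ℕ) ≠ ((f i : Fin n) : ℕ) := by
    intro hh
    have h1 : v = i := hinj (Fin.ext hh)
    rw [Fin.ext_iff] at h1
    simp only [hv] at h1
    omega
  have hvne' : ((f v : Fin n) : ℕ) ≠ (v : ℕ) := fun hh => hvne (Fin.ext hh)
  have hvS : v ∈ S := by
    simp only [hS, Finset.mem_filter, Finset.mem_univ, true_and, Fin.lt_def]
    have hvv : (v : ℕ) = (i : ℕ) + 1 := rfl
    omega
  have hmv : ((f i : Fin n) : ℕ) - (i : ℕ) ≤ ((f v : Fin n) : ℕ) - (v : ℕ) := hmin v hvS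
  have hvv : (v : ℕ) = (i : ℕ) + 1 := rfl
  omega

lemma eN_lt_sum {i k s s' : ℕ} (hsum : s = s' + 2) (hi1 : i + 1 < s) (hk : k < s') :
    eN i k < s := by unfold eN; split <;> omega

lemma rN_lt {i v s s' : ℕ} (hsum : s = s' + 2) (hi1 : i + 1 < s) (hs' : 0 < s')
    (hv : v < s) : rN i v < s' := by unfold rN; split_ifs <;> omega

lemma eN_rN {i v s s' : ℕ} (hsum : s = s' + 2) (hi1 : i + 1 < s) (hv : v < s)
    (h1 : v ≠ i) (h2 : v ≠ i + 1) : eN i (rN i v) = v := by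
  unfold eN rN; split_ifs <;> omega

lemma rN_eN (i k : ℕ) : rN i (eN i k) = k := by
  unfold eN rN; split_ifs <;> omega

lemma eN_mono {i k k' : ℕ} (h : k < k') : eN i k < eN i k' := by
  unfold eN; split_ifs <;> omega

lemma eN_ne (i k : ℕ) : eN i k ≠ i ∧ eN i k ≠ i + 1 := by
  unfold eN; split_ifs <;> omega

def downF (sizes sizes' : List ℕ) (hsum : sizes.sum = sizes'.sum + 2) (i : ℕ)
    (hi1 : i + 1 < sizes.sum) (f : Fin sizes.sum → Fin sizes.sum) :
    Fin sizes'.sum → Fin sizes'.sum := fun k =>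
  ⟨rN i ((f ⟨eN i (k : ℕ), eN_lt_sum hsum hi1 k.isLt⟩ : Fin _) : ℕ),
    rN_lt hsum hi1 k.pos (f ⟨eN i (k : ℕ), eN_lt_sum hsum hi1 k.isLt⟩).isLt⟩

lemma downF_val (sizes sizes' : List ℕ) (hsum : sizes.sum = sizes'.sum + 2) (i : ℕ)
    (hi1 : i + 1 < sizes.sum) (f : Fin sizes.sum → Fin sizes.sum) (k : Fin sizes'.sum) :
    ((downF sizes sizes' hsum i hi1 f k : Fin _) : ℕ) =
      rN i ((f ⟨eN i (k : ℕ), eN_lt_sum hsum hi1 k.isLt⟩ : Fin _) : ℕ) := rfl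

lemma down_isCM (sizes sizes' : List ℕ) (hsum : sizes.sum = sizes'.sum + 2) (i : ℕ)
    (hi1 : i + 1 < sizes.sum)
    (hbox : ∀ k, k < sizes'.sum → boxOf sizes' k = boxOf sizes (eN i k))
    (f : Fin sizes.sum → Fin sizes.sum) (hf : IsCM sizes f)
    (hfi : ((f ⟨i, by omega⟩ : Fin _) : ℕ) = i + 1) :
    IsCM sizes' (downF sizes sizes' hsum i hi1 f) := by
  obtain ⟨hinv, hfpf, hnc, hbx⟩ := hf
  have hinj : Function.Injective f := hinv.injective
  have hfi' : f ⟨i, by omega⟩ = ⟨i + 1, hi1⟩ := Fin.ext hfi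
  have hfi2 : f ⟨i + 1, hi1⟩ = ⟨i, by omega⟩ := by
    apply hinj
    rw [hinv, hfi']
  -- the distinguished endpoints are avoided
  have hne : ∀ j : Fin sizes.sum, (j : ℕ) ≠ i → (j : ℕ) ≠ i + 1 →
      ((f j : Fin _) : ℕ) ≠ i ∧ ((f j : Fin _) : ℕ) ≠ i + 1 := by
    intro j hj1 hj2
    constructor
    · intro hh
      have h1 : f j = ⟨i, by omega⟩ := Fin.ext hh
      have h2 : j = ⟨i + 1, hi1⟩ := by
        rw [← hfi2] at h1; exact hinj h1
      rw [Fin.ext_iff] at h2; exact hj2 h2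
    · intro hh
      have h1 : f j = ⟨i + 1, hi1⟩ := Fin.ext hh
      have h2 : j = ⟨i, by omega⟩ := by
        rw [← hfi'] at h1; exact hinj h1
      rw [Fin.ext_iff] at h2; exact hj1 h2
  set f' := downF sizes sizes' hsum i hi1 f with hf'def
  -- key: eN i (f' k) = f (eN i k)
  have key : ∀ k : Fin sizes'.sum,
      eN i ((f' k : Fin _) : ℕ) =
        ((f ⟨eN i (k : ℕ), eN_lt_sum hsum hi1 k.isLt⟩ : Fin _) : ℕ) := by
    intro k
    have h1 := hne ⟨eN i (k : ℕ), eN_lt_sum hsum hi1 k.isLt⟩ (eN_ne i (k : ℕ)).1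
      (eN_ne i (k : ℕ)).2
    rw [hf'def, downF_val]
    exact eN_rN hsum hi1 (f ⟨eN i (k : ℕ), eN_lt_sum hsum hi1 k.isLt⟩).isLt h1.1 h1.2
  have keyFin : ∀ k : Fin sizes'.sum,
      (⟨eN i ((f' k : Fin _) : ℕ), eN_lt_sum hsum hi1 (f' k).isLt⟩ : Fin sizes.sum) =
        f ⟨eN i (k : ℕ), eN_lt_sum hsum hi1 k.isLt⟩ := fun k => Fin.ext (key k)
  refine ⟨?_, ?_, ?_, ?_⟩
  · -- involutive
    intro k
    apply Fin.ext
    rw [hf'def, downF_val, ← hf'def]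
    have h2 : (⟨eN i ((f' k : Fin _) : ℕ), eN_lt_sum hsum hi1 (f' k).isLt⟩ : Fin sizes.sum) =
        f ⟨eN i (k : ℕ), eN_lt_sum hsum hi1 k.isLt⟩ := keyFin k
    rw [h2, hinv]
    exact rN_eN i (k : ℕ)
  · -- fixed-point-free
    intro k hk
    have h2 : ((f' k : Fin _) : ℕ) = (k : ℕ) := by rw [hk]
    have h3 : ((f ⟨eN i (k : ℕ), eN_lt_sum hsum hi1 k.isLt⟩ : Fin _) : ℕ) = eN i (k : ℕ) := by
      rw [← key k, h2]
    exact hfpf _ (Fin.ext h3)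
  · -- noncrossing
    intro k₁ k₂ h1 h2 h3
    rw [Fin.lt_def] at h1 h2 h3
    have m1 : eN i (k₁ : ℕ) < eN i (k₂ : ℕ) := eN_mono h1
    have m2 : eN i (k₂ : ℕ) < eN i ((f' k₁ : Fin _) : ℕ) := eN_mono h2
    have m3 : eN i ((f' k₁ : Fin _) : ℕ) < eN i ((f' k₂ : Fin _) : ℕ) := eN_mono h3
    rw [key k₁] at m2
    rw [key k₁, key k₂] at m3
    exact hnc ⟨eN i (k₁ : ℕ), eN_lt_sum hsum hi1 k₁.isLt⟩
      ⟨eN i (k₂ : ℕ), eN_lt_sum hsum hi1 k₂.isLt⟩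
      (Fin.lt_def.2 m1) (Fin.lt_def.2 m2) (Fin.lt_def.2 m3)
  · -- box condition
    intro k
    rw [hbox _ k.isLt, hbox _ (f' k).isLt, key k]
    exact hbx ⟨eN i (k : ℕ), eN_lt_sum hsum hi1 k.isLt⟩

def Pc (w₁ w₂ μ : ℕ) : Prop := ∃ a b c : ℕ, w₁ = a + c ∧ w₂ = b + c ∧ μ = a + b

lemma f_ne_pair {n : ℕ} (f : Fin n → Fin n) (hinv : Function.Involutive f) (i : Fin n)
    (hi1 : (i : ℕ) + 1 < n) (hfi : ((f i : Fin n) : ℕ) = (i : ℕ) + 1) (v : Fin n)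
    (hv1 : (v : ℕ) ≠ (i : ℕ)) (hv2 : (v : ℕ) ≠ (i : ℕ) + 1) :
    ((f v : Fin n) : ℕ) ≠ (i : ℕ) ∧ ((f v : Fin n) : ℕ) ≠ (i : ℕ) + 1 := by
  have hinj := hinv.injective
  have hfi' : f i = ⟨(i : ℕ) + 1, hi1⟩ := Fin.ext hfi
  have hfi2 : f ⟨(i : ℕ) + 1, hi1⟩ = i := by apply hinj; rw [hinv, hfi']
  constructor
  · intro hh
    have h1 : f v = i := Fin.ext hh
    have h2 : v = f i := by rw [← h1, hinv]
    rw [hfi'] at h2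
    exact hv2 (congrArg Fin.val h2)
  · intro hh
    have h1 : f v = ⟨(i : ℕ) + 1, hi1⟩ := Fin.ext hh
    have h2 := hinv v
    rw [h1, hfi2] at h2
    exact hv1 (congrArg Fin.val h2.symm)

lemma box_transfer (w₁ w₂ μ u₁ u₂ u₃ i : ℕ)
    (h : (i+1 = w₁ ∧ 0 < w₂ ∧ u₁ = w₁-1 ∧ u₂ = w₂-1 ∧ u₃ = μ) ∨
         (i+1 = w₁ ∧ w₂ = 0 ∧ 0 < μ ∧ u₁ = w₁-1 ∧ u₂ = 0 ∧ u₃ = μ-1) ∨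
         (i+1 = w₁+w₂ ∧ 0 < w₂ ∧ 0 < μ ∧ u₁ = w₁ ∧ u₂ = w₂-1 ∧ u₃ = μ-1))
    (hi1 : i+1 < w₁+w₂+μ) :
    ∀ k, k < [u₁, u₂, u₃].sum → boxOf [u₁, u₂, u₃] k = boxOf [w₁, w₂, μ] (eN i k) := by
  intro k hk
  rw [sum3] at hk
  obtain ⟨h1, h2, h3, h4, h5⟩ | ⟨h1, h2, h3, h4, h5, h6⟩ | ⟨h1, h2, h3, h4, h5, h6⟩ := h
  · have hek : eN i k < w₁+w₂+μ := by unfold eN; split_ifs <;> omega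
    rw [boxOf_eval _ _ _ _ (by omega), boxOf_eval _ _ _ _ hek]
    unfold eN; split_ifs <;> omega
  · have hek : eN i k < w₁+w₂+μ := by unfold eN; split_ifs <;> omega
    rw [boxOf_eval _ _ _ _ (by omega), boxOf_eval _ _ _ _ hek]
    unfold eN; split_ifs <;> omega
  · have hek : eN i k < w₁+w₂+μ := by unfold eN; split_ifs <;> omega
    rw [boxOf_eval _ _ _ _ (by omega), boxOf_eval _ _ _ _ hek]
    unfold eN; split_ifs <;> omega

lemma G_pair (a b c i : ℕ)
    (h : (i+1 = a+c ∧ 0 < c) ∨ (i+1 = a ∧ b = 0 ∧ c = 0) ∨ (i+1 = a+b+2*c ∧ 0 < b)) :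
    G a b c i = i+1 ∧ G a b c (i+1) = i := by
  obtain ⟨h1, h2⟩ | ⟨h1, h2, h3⟩ | ⟨h1, h2⟩ := h
  · constructor <;> (unfold G; split_ifs <;> omega)
  · constructor <;> (unfold G; split_ifs <;> omega)
  · constructor <;> (unfold G; split_ifs <;> omega)

lemma generic_step (w₁ w₂ μ u₁ u₂ u₃ : ℕ)
    (hsum' : [w₁,w₂,μ].sum = [u₁,u₂,u₃].sum + 2)
    (f : Fin [w₁,w₂,μ].sum → Fin [w₁,w₂,μ].sum) (hinv : Function.Involutive f)
    (i : Fin [w₁,w₂,μ].sum) (hi1 : (i:ℕ)+1 < [w₁,w₂,μ].sum)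
    (hfi : ((f i : Fin _) : ℕ) = (i:ℕ)+1)
    (heq' : ∀ k, downF [w₁,w₂,μ] [u₁,u₂,u₃] hsum' (↑i) hi1 f k = Gfin u₁ u₂ u₃ k)
    (a' b' c' : ℕ) (h1 : u₁ = a'+c') (h2 : u₂ = b'+c') (h3 : u₃ = a'+b')
    (v : Fin [w₁,w₂,μ].sum) (hv1 : (v:ℕ) ≠ ↑i) (hv2 : (v:ℕ) ≠ (i:ℕ)+1) :
    ((f v : Fin _) : ℕ) = eN (↑i) (G a' b' c' (rN (↑i) (↑v))) := by
  have hk : rN (↑i) (↑v) < [u₁,u₂,u₃].sum := by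
    have hvs := v.isLt
    unfold rN; split_ifs <;> omega
  have e1 := congrArg Fin.val (heq' ⟨rN (↑i) (↑v), hk⟩)
  rw [Gfin_val u₁ u₂ u₃ a' b' c' h1 h2 h3] at e1
  rw [downF_val] at e1
  have e2 : (⟨eN (↑i) ((⟨rN (↑i) (↑v), hk⟩ : Fin [u₁,u₂,u₃].sum) : ℕ),
      eN_lt_sum hsum' hi1 (⟨rN (↑i) (↑v), hk⟩ : Fin [u₁,u₂,u₃].sum).isLt⟩ :
      Fin [w₁,w₂,μ].sum) = v := by
    apply Fin.ext
    show eN (↑i) (rN (↑i) (↑v)) = (v : ℕ)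
    exact eN_rN hsum' hi1 v.isLt hv1 hv2
  rw [e2] at e1
  have e1' : rN (↑i) ((f v : Fin _) : ℕ) = G a' b' c' (rN (↑i) (↑v)) := e1
  have hfne := f_ne_pair f hinv i hi1 hfi v hv1 hv2
  rw [← e1']
  exact (eN_rN hsum' hi1 (f v).isLt hfne.1 hfne.2).symm

theorem master : ∀ (N w₁ w₂ μ : ℕ), w₁ + w₂ + μ = N → ∀ f, IsCM [w₁, w₂, μ] f →
    Pc w₁ w₂ μ ∧ ∀ v, f v = Gfin w₁ w₂ μ v := by
  intro N
  induction N using Nat.strong_induction_on with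
  | _ N IH =>
  intro w₁ w₂ μ hN f hfCM
  have hN' : [w₁, w₂, μ].sum = w₁ + w₂ + μ := sum3 w₁ w₂ μ
  by_cases hzero : w₁ + w₂ + μ = 0
  · refine ⟨⟨0, 0, 0, by omega, by omega, by omega⟩, ?_⟩
    intro v
    exact absurd (lt_of_lt_of_eq v.isLt hN') (by omega)
  · have hpos : 0 < [w₁, w₂, μ].sum := by rw [hN']; omega
    obtain ⟨i, hi1, hfi⟩ := exists_adj f hfCM.1 hfCM.2.1 hfCM.2.2.1 hpos
    have hinv := hfCM.1
    have hilt : (i : ℕ) + 1 < w₁ + w₂ + μ := lt_of_lt_of_eq hi1 hN'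
    have hbi := hfCM.2.2.2 i
    rw [hfi, boxOf_eval w₁ w₂ μ _ (by omega), boxOf_eval w₁ w₂ μ _ (by omega)] at hbi
    have hfi2 : f ⟨(i : ℕ) + 1, hi1⟩ = i := by
      apply hinv.injective
      rw [hinv]
      exact (Fin.ext hfi : f i = ⟨(i : ℕ) + 1, hi1⟩).symm
    have hcase : ((i : ℕ) + 1 = w₁) ∨ ((i : ℕ) + 1 = w₁ + w₂ ∧ 0 < w₂) := by
      split_ifs at hbi <;> omega
    rcases hcase with hA | ⟨hC, hw₂⟩
    · by_cases hw₂ : 0 < w₂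
      · -- Case A : pair at the box0/box1 boundary
        have hw₁ : 0 < w₁ := by omega
        have hsum' : [w₁, w₂, μ].sum = [w₁-1, w₂-1, μ].sum + 2 := by
          rw [sum3, sum3]; omega
        have hbox' := box_transfer w₁ w₂ μ (w₁-1) (w₂-1) μ (↑i)
          (Or.inl ⟨hA, hw₂, rfl, rfl, rfl⟩) hilt
        have hf' := down_isCM [w₁, w₂, μ] [w₁-1, w₂-1, μ] hsum' (↑i) hi1 hbox' f hfCM hfi
        obtain ⟨hPc', heq'⟩ := IH ((w₁-1) + (w₂-1) + μ) (by omega) (w₁-1) (w₂-1) μ rfl _ hf'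
        obtain ⟨a, b, c', hA1, hA2, hA3⟩ := hPc'
        have hGp := G_pair a b (c'+1) (↑i) (Or.inl ⟨by omega, by omega⟩)
        refine ⟨⟨a, b, c'+1, by omega, by omega, by omega⟩, ?_⟩
        intro v
        apply Fin.ext
        rw [Gfin_val w₁ w₂ μ a b (c'+1) (by omega) (by omega) (by omega) v]
        by_cases hv1 : (v : ℕ) = ↑i
        · have hvi : v = i := Fin.ext hv1
          rw [hvi, hfi]
          exact hGp.1.symm
        · by_cases hv2 : (v : ℕ) = (i : ℕ) + 1
          · have hvi : v = ⟨(i : ℕ) + 1, hi1⟩ := Fin.ext hv2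
            rw [hvi, hfi2]
            exact hGp.2.symm
          · rw [generic_step w₁ w₂ μ (w₁-1) (w₂-1) μ hsum' f hinv i hi1 hfi heq'
              a b c' hA1 hA2 hA3 v hv1 hv2]
            have hieq : (i : ℕ) = a + (c'+1) - 1 := by omega
            rw [hieq]
            exact compatA a b (c'+1) c' (↑v) rfl
              (by have := lt_of_lt_of_eq v.isLt hN'; omega) (by omega) (by omega)
      · -- Case B : pair at the box0/box2 boundary (w₂ = 0)
        have hw₂0 : w₂ = 0 := by omega
        have hw₁ : 0 < w₁ := by omega
        have hμ : 0 < μ := by omega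
        have hsum' : [w₁, w₂, μ].sum = [w₁-1, w₂, μ-1].sum + 2 := by
          rw [sum3, sum3]; omega
        have hbox' := box_transfer w₁ w₂ μ (w₁-1) w₂ (μ-1) (↑i)
          (Or.inr (Or.inl ⟨hA, hw₂0, hμ, rfl, hw₂0, rfl⟩)) hilt
        have hf' := down_isCM [w₁, w₂, μ] [w₁-1, w₂, μ-1] hsum' (↑i) hi1 hbox' f hfCM hfi
        obtain ⟨hPc', heq'⟩ := IH ((w₁-1) + w₂ + (μ-1)) (by omega) (w₁-1) w₂ (μ-1) rfl _ hf'
        obtain ⟨a', b', c', hA1, hA2, hA3⟩ := hPc'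
        have hGp := G_pair (a'+1) 0 0 (↑i) (Or.inr (Or.inl ⟨by omega, rfl, rfl⟩))
        refine ⟨⟨a'+1, 0, 0, by omega, by omega, by omega⟩, ?_⟩
        intro v
        apply Fin.ext
        rw [Gfin_val w₁ w₂ μ (a'+1) 0 0 (by omega) (by omega) (by omega) v]
        by_cases hv1 : (v : ℕ) = ↑i
        · have hvi : v = i := Fin.ext hv1
          rw [hvi, hfi]
          exact hGp.1.symm
        · by_cases hv2 : (v : ℕ) = (i : ℕ) + 1
          · have hvi : v = ⟨(i : ℕ) + 1, hi1⟩ := Fin.ext hv2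
            rw [hvi, hfi2]
            exact hGp.2.symm
          · rw [generic_step w₁ w₂ μ (w₁-1) w₂ (μ-1) hsum' f hinv i hi1 hfi heq'
              a' 0 0 (by omega) (by omega) (by omega) v hv1 hv2]
            have hieq : (i : ℕ) = (a'+1) - 1 := by omega
            rw [hieq]
            exact compatB (a'+1) a' (↑v) rfl
              (by have := lt_of_lt_of_eq v.isLt hN'; omega) (by omega) (by omega)
    · -- Case C : pair at the box1/box2 boundary
      have hμ : 0 < μ := by omega
      have hsum' : [w₁, w₂, μ].sum = [w₁, w₂-1, μ-1].sum + 2 := by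
        rw [sum3, sum3]; omega
      have hbox' := box_transfer w₁ w₂ μ w₁ (w₂-1) (μ-1) (↑i)
        (Or.inr (Or.inr ⟨hC, hw₂, hμ, rfl, rfl, rfl⟩)) hilt
      have hf' := down_isCM [w₁, w₂, μ] [w₁, w₂-1, μ-1] hsum' (↑i) hi1 hbox' f hfCM hfi
      obtain ⟨hPc', heq'⟩ := IH (w₁ + (w₂-1) + (μ-1)) (by omega) w₁ (w₂-1) (μ-1) rfl _ hf'
      obtain ⟨a', b', c', hA1, hA2, hA3⟩ := hPc'
      have hGp := G_pair a' (b'+1) c' (↑i) (Or.inr (Or.inr ⟨by omega, by omega⟩))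
      refine ⟨⟨a', b'+1, c', by omega, by omega, by omega⟩, ?_⟩
      intro v
      apply Fin.ext
      rw [Gfin_val w₁ w₂ μ a' (b'+1) c' (by omega) (by omega) (by omega) v]
      by_cases hv1 : (v : ℕ) = ↑i
      · have hvi : v = i := Fin.ext hv1
        rw [hvi, hfi]
        exact hGp.1.symm
      · by_cases hv2 : (v : ℕ) = (i : ℕ) + 1
        · have hvi : v = ⟨(i : ℕ) + 1, hi1⟩ := Fin.ext hv2
          rw [hvi, hfi2]
          exact hGp.2.symm
        · rw [generic_step w₁ w₂ μ w₁ (w₂-1) (μ-1) hsum' f hinv i hi1 hfi heq'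
            a' b' c' hA1 hA2 hA3 v hv1 hv2]
          have hieq : (i : ℕ) = a' + (b'+1) + 2*c' - 1 := by omega
          rw [hieq]
          exact compatC a' (b'+1) c' b' (↑v) rfl
            (by have := lt_of_lt_of_eq v.isLt hN'; omega) (by omega) (by omega)



/-- **The number of crossingless matches in `CM_{w₁,w₂}^μ`** is `1` if
`|w₁ - w₂| ≤ μ ≤ w₁ + w₂` and `μ ≡ w₁ + w₂ (mod 2)`, and `0` otherwise. -/
theorem cm_count_two_boxes (w₁ w₂ μ : ℕ) :
    cmCount [w₁, w₂, μ] =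
      if max w₁ w₂ - min w₁ w₂ ≤ μ ∧ μ ≤ w₁ + w₂ ∧ (w₁ + w₂) % 2 = μ % 2
      then 1 else 0 := by
  have hiff : (max w₁ w₂ - min w₁ w₂ ≤ μ ∧ μ ≤ w₁ + w₂ ∧ (w₁ + w₂) % 2 = μ % 2) ↔
      Pc w₁ w₂ μ := by
    constructor
    · rintro ⟨h1, h2, h3⟩
      exact ⟨(w₁ + μ - w₂)/2, (w₂ + μ - w₁)/2, (w₁ + w₂ - μ)/2, by omega, by omega, by omega⟩
    · rintro ⟨a, b, c, h1, h2, h3⟩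
      exact ⟨by omega, by omega, by omega⟩
  rw [cmCount]
  split_ifs with hcond
  · obtain ⟨a, b, c, h1, h2, h3⟩ := hiff.1 hcond
    have hex := isCM_Gfin w₁ w₂ μ a b c h1 h2 h3
    rw [Nat.card_eq_one_iff_unique]
    refine ⟨⟨?_⟩, ⟨⟨_, hex⟩⟩⟩
    intro x y
    obtain ⟨-, hx⟩ := master (w₁+w₂+μ) w₁ w₂ μ rfl x.1 x.2
    obtain ⟨-, hy⟩ := master (w₁+w₂+μ) w₁ w₂ μ rfl y.1 y.2
    apply Subtype.ext; funext v; rw [hx v, hy v]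
  · have hempty : IsEmpty
        {f : Fin ([w₁,w₂,μ].sum) → Fin ([w₁,w₂,μ].sum) // IsCM [w₁,w₂,μ] f} := by
      constructor; rintro ⟨g, hg⟩
      obtain ⟨hPc, -⟩ := master (w₁+w₂+μ) w₁ w₂ μ rfl g hg
      exact hcond (hiff.2 hPc)
    exact Nat.card_of_isEmpty
end
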